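/- Let n ≥ 1, ε > 0, λ ∈ ℝ, σ > 0 and E ∈ ℝⁿ. Suppose v : ℝ × ℝⁿ → ℂ is a classical Schwartz solution of iε∂_t v + (ε²/2)Δv = λ|v|^{2σ}v. Define u : ℝ × ℝⁿ → ℂ by u(t,x) := v(t, x + (t²/2)E) · exp(−i(t(E·x) + (t³/6)|E|²)/ε). Then u is a classical Schwartz solution of iε∂_t u + (ε²/2)Δu = (E·x)u + λ|u|^{2σ}u, and u(0,·) = v(0,·). -/

import Mathlib

open MeasureTheory Real Complex
open scoped ENNReal NNReal

noncomputable section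

/-- `ℝⁿ`: n-dimensional Euclidean space. -/
abbrev Eucl (n : ℕ) := EuclideanSpace ℝ (Fin n)

/-- Partial derivative in the `j`-th coordinate direction. -/
def pd {n : ℕ} (j : Fin n) (f : Eucl n → ℂ) (x : Eucl n) : ℂ :=
  fderiv ℝ f x (EuclideanSpace.single j 1)

/-- Laplacian in the space variables. -/
def lap {n : ℕ} (f : Eucl n → ℂ) (x : Eucl n) : ℂ := ∑ j, pd j (pd j f) x

/-- A function agreeing with a Schwartz function. -/
def IsSchwartz {n : ℕ} (f : Eucl n → ℂ) : Prop :=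
  ∃ g : SchwartzMap (Eucl n) ℂ, ∀ x, f x = g x

/-- `u` is a classical Schwartz solution of
`i ε ∂ₜ u + (ε²/2) Δ u = V(x) u + lam |u|^(2σ) u` on `I × ℝⁿ`:
`u` is smooth on `I × ℝⁿ`, `u(t,·)` is Schwartz for each `t ∈ I`, and the
equation holds pointwise. -/
def IsSol {n : ℕ} (I : Set ℝ) (ε lam σ : ℝ) (V : Eucl n → ℝ) (u : ℝ → Eucl n → ℂ) : Prop :=
  ContDiffOn ℝ (⊤ : ℕ∞) (fun p : ℝ × Eucl n => u p.1 p.2) (I ×ˢ Set.univ) ∧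
  (∀ t ∈ I, IsSchwartz (u t)) ∧
  ∀ t ∈ I, ∀ x, Complex.I * ε * deriv (fun s => u s x) t + (ε^2/2) * lap (u t) x
    = (V x : ℝ) * u t x + (lam : ℝ) * ((‖u t x‖ ^ (2*σ) : ℝ) : ℂ) * u t x

/-!
Translating space by `(t²/2)E` commutes with `Δ` and turns `∂ₜ` into `∂ₜ + t E·∇`. Multiplying by
the plane wave `exp(κ E·x)`, `κ = -it/ε`, turns `Δ` into `Δ + 2κ E·∇ + κ²|E|²`, while its time
derivative contributes `-i(E·x + t²|E|²/2)/ε`. In `iε∂ₜ + (ε²/2)Δ` the transport terms `±iεt E·∇`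
and the terms `±t²|E|²/2` cancel, leaving the potential `E·x`; the nonlinearity is unchanged because
the phase has modulus one. Both operations preserve Schwartz space, the phase being a function of
temperate growth.
-/

theorem iteratedDeriv_cexp_ofReal_mul_I (k : ℕ) :
    iteratedDeriv k (fun θ : ℝ => cexp (θ * I)) = fun θ : ℝ => I ^ k * cexp (θ * I) := by
  induction k with
  | zero => simp
  | succ k ih =>
    rw [iteratedDeriv_succ, ih]
    funext θ
    have h : HasDerivAt (fun s : ℝ => cexp (s * I)) (cexp (θ * I) * (1 * I)) θ :=
      ((hasDerivAt_id θ).ofReal_comp.mul_const I).cexp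
    rw [(h.const_mul (I ^ k)).deriv]
    ring

theorem hasTemperateGrowth_cexp_ofReal_mul_I :
    Function.HasTemperateGrowth (fun θ : ℝ => cexp (θ * I)) := by
  refine ⟨Complex.contDiff_exp.comp (ofRealCLM.contDiff.mul contDiff_const),
    fun k => ⟨0, 1, fun θ => ?_⟩⟩
  rw [norm_iteratedFDeriv_eq_norm_iteratedDeriv, iteratedDeriv_cexp_ofReal_mul_I]
  simp

theorem Function.HasTemperateGrowth.cexp_ofReal_mul_I {F : Type*} [NormedAddCommGroup F]
    [NormedSpace ℝ F] {θ : F → ℝ} (hθ : θ.HasTemperateGrowth) :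
    Function.HasTemperateGrowth (fun x => cexp (θ x * I)) :=
  hasTemperateGrowth_cexp_ofReal_mul_I.comp hθ

theorem DifferentiableAt.hasDerivAt_comp_prodMk {X Y : Type*} [NormedAddCommGroup X]
    [NormedSpace ℝ X] [NormedAddCommGroup Y] [NormedSpace ℝ Y] {F : ℝ × X → Y} {γ : ℝ → X}
    {γ' : X} {t : ℝ} (hF : DifferentiableAt ℝ F (t, γ t)) (hγ : HasDerivAt γ γ' t) :
    HasDerivAt (fun s => F (s, γ s))
      (deriv (fun s => F (s, γ t)) t + fderiv ℝ (fun z => F (t, z)) (γ t) γ') t := by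
  have hs : HasDerivAt (fun s => F (s, γ t)) (fderiv ℝ F (t, γ t) (1, 0)) t :=
    hF.hasFDerivAt.comp_hasDerivAt t ((hasDerivAt_id t).prodMk (hasDerivAt_const t _))
  have hz : HasFDerivAt (fun z => F (t, z)) ((fderiv ℝ F (t, γ t)).comp (.inr ℝ ℝ X)) (γ t) :=
    hF.hasFDerivAt.comp _ (hasFDerivAt_prodMk_right t (γ t))
  rw [hs.deriv, hz.fderiv, ContinuousLinearMap.comp_apply, ContinuousLinearMap.inr_apply,
    ← map_add, Prod.mk_add_mk, add_zero, zero_add]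
  exact hF.hasFDerivAt.comp_hasDerivAt t ((hasDerivAt_id t).prodMk hγ)

section Euclidean

variable {n : ℕ}

theorem IsSchwartz.comp_add_const_mul_cexp {f : Eucl n → ℂ} (hf : IsSchwartz f)
    (c : Eucl n) {θ : Eucl n → ℝ} (hθ : θ.HasTemperateGrowth) :
    IsSchwartz (fun x => f (x + c) * cexp (θ x * I)) := by
  obtain ⟨g, hg⟩ := hf
  refine ⟨SchwartzMap.smulLeftCLM ℂ (fun x => cexp (θ x * I))
    (SchwartzMap.compSubConstCLM ℂ (-c) g), fun x => ?_⟩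
  rw [SchwartzMap.smulLeftCLM_apply_apply hθ.cexp_ofReal_mul_I, SchwartzMap.compSubConstCLM_apply,
    sub_neg_eq_add, ← hg, smul_eq_mul, mul_comm]

theorem pd_comp_add_const (f : Eucl n → ℂ) (c : Eucl n) (j : Fin n) :
    pd j (fun z => f (z + c)) = fun z => pd j f (z + c) := by
  funext z
  simp only [pd, fderiv_comp_add_right]

theorem lap_comp_add_const (f : Eucl n → ℂ) (c x : Eucl n) :
    lap (fun z => f (z + c)) x = lap f (x + c) := by
  simp only [lap, pd_comp_add_const]

theorem sum_mul_pd (f : Eucl n → ℂ) (z E : Eucl n) :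
    ∑ j, (E j : ℂ) * pd j f z = fderiv ℝ f z E := by
  conv_rhs => rw [← (EuclideanSpace.basisFun (Fin n) ℝ).sum_repr E]
  simp [pd, map_sum]

theorem pd_mul_cexp_inner {f : Eucl n → ℂ} {z : Eucl n} (hf : DifferentiableAt ℝ f z)
    (E : Eucl n) (κ β : ℂ) (j : Fin n) :
    pd j (fun z => f z * cexp (κ * inner ℝ E z + β)) z
      = (pd j f z + κ * E j * f z) * cexp (κ * inner ℝ E z + β) := by
  have hphase : HasFDerivAt (fun z : Eucl n => κ * (inner ℝ E z : ℂ) + β)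
      (κ • ofRealCLM.comp (innerSL ℝ E)) z :=
    ((ofRealCLM.comp (innerSL ℝ E)).hasFDerivAt.const_mul κ).add_const β
  rw [pd, (hf.hasFDerivAt.fun_mul hphase.cexp).fderiv]
  simp [pd, EuclideanSpace.inner_single_right]
  ring

theorem lap_mul_cexp_inner {f : Eucl n → ℂ} (hf : ContDiff ℝ 2 f) (E : Eucl n) (κ β : ℂ)
    (z : Eucl n) :
    lap (fun z => f z * cexp (κ * inner ℝ E z + β)) z
      = (lap f z + 2 * κ * fderiv ℝ f z E + κ ^ 2 * ‖E‖ ^ 2 * f z)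
          * cexp (κ * inner ℝ E z + β) := by
  have hf_diff : Differentiable ℝ f := hf.differentiable two_ne_zero
  have hpd_diff : ∀ j, Differentiable ℝ (pd j f) := fun j =>
    ((hf.fderiv_right (m := 1) le_rfl).clm_apply contDiff_const).differentiable one_ne_zero
  have hfirst_diff : ∀ j, Differentiable ℝ (fun z => pd j f z + κ * E j * f z) := fun j =>
    (hpd_diff j).add (hf_diff.const_mul _)
  have hpd_once : ∀ j, pd j (fun z => f z * cexp (κ * inner ℝ E z + β))
      = fun z => (pd j f z + κ * E j * f z) * cexp (κ * inner ℝ E z + β) := fun j =>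
    funext fun z => pd_mul_cexp_inner (hf_diff z) E κ β j
  have hpd_twice : ∀ j, pd j (fun z => pd j f z + κ * E j * f z) z
      = pd j (pd j f) z + κ * E j * pd j f z := fun j => by
    rw [pd, ((hpd_diff j z).hasFDerivAt.fun_add ((hf_diff z).hasFDerivAt.const_mul _)).fderiv]
    rfl
  have hnorm : (‖E‖ ^ 2 : ℂ) = ∑ j, (E j : ℂ) ^ 2 := by
    simp only [← ofReal_pow, EuclideanSpace.norm_sq_eq, Real.norm_eq_abs, _root_.sq_abs]
    push_cast
    rfl
  calc lap (fun z => f z * cexp (κ * inner ℝ E z + β)) z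
      = ∑ j, (pd j (pd j f) z + κ * E j * pd j f z + κ * E j * (pd j f z + κ * E j * f z))
          * cexp (κ * inner ℝ E z + β) := by
        refine Finset.sum_congr rfl fun j _ => ?_
        rw [hpd_once, pd_mul_cexp_inner (hfirst_diff j z), hpd_twice]
    _ = _ := by
        rw [← sum_mul_pd, hnorm, lap]
        simp only [Finset.sum_mul, Finset.mul_sum, ← Finset.sum_add_distrib]
        exact Finset.sum_congr rfl fun j _ => by ring

end Euclidean

section StarkGauge

variable {n : ℕ}

def starkPhase (ε : ℝ) (E : Eucl n) (t : ℝ) (x : Eucl n) : ℂ :=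
  cexp (-I * (((t * inner ℝ E x + t ^ 3 / 6 * ‖E‖ ^ 2) / ε : ℝ) : ℂ))

def starkGauge (ε : ℝ) (E : Eucl n) (v : ℝ → Eucl n → ℂ) (t : ℝ) (x : Eucl n) : ℂ :=
  v t (x + (t ^ 2 / 2) • E) * starkPhase ε E t x

variable {ε : ℝ} {E : Eucl n} {v : ℝ → Eucl n → ℂ}

theorem norm_starkPhase (t : ℝ) (x : Eucl n) : ‖starkPhase ε E t x‖ = 1 := by
  rw [starkPhase, neg_mul, ← mul_comm, ← neg_mul, ← ofReal_neg, norm_exp_ofReal_mul_I]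

theorem starkPhase_eq_cexp_inner (t : ℝ) (x : Eucl n) :
    starkPhase ε E t x
      = cexp (-I * (t / ε : ℝ) * inner ℝ E x + -I * (t ^ 3 / 6 * ‖E‖ ^ 2 / ε : ℝ)) := by
  rw [starkPhase]
  push_cast
  ring_nf

theorem hasDerivAt_starkPhase (t : ℝ) (x : Eucl n) :
    HasDerivAt (fun s => starkPhase ε E s x)
      (-I * ((inner ℝ E x + t ^ 2 / 2 * ‖E‖ ^ 2) / ε : ℝ) * starkPhase ε E t x) t := by
  have h : HasDerivAt (fun s : ℝ => (s * inner ℝ E x + s ^ 3 / 6 * ‖E‖ ^ 2) / ε)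
      ((inner ℝ E x + t ^ 2 / 2 * ‖E‖ ^ 2) / ε) t := by
    refine ((((hasDerivAt_id' t).mul_const (inner ℝ E x)).fun_add
      (((hasDerivAt_pow 3 t).div_const 6).mul_const (‖E‖ ^ 2))).div_const ε).congr_deriv ?_
    push_cast
    ring
  rw [mul_comm]
  exact (h.ofReal_comp.const_mul (-I)).cexp

theorem contDiff_starkGauge {k : WithTop ℕ∞}
    (hv : ContDiff ℝ k (fun p : ℝ × Eucl n => v p.1 p.2)) :
    ContDiff ℝ k (fun p : ℝ × Eucl n => starkGauge ε E v p.1 p.2) := by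
  refine (hv.comp (contDiff_fst.prodMk (contDiff_snd.add
    (((contDiff_fst.pow 2).div_const 2).smul contDiff_const)))).mul ?_
  exact Complex.contDiff_exp.comp (contDiff_const.mul (ofRealCLM.contDiff.comp
    (((contDiff_fst.mul (contDiff_const.inner ℝ contDiff_snd)).add
      (((contDiff_fst.pow 3).div_const 6).mul contDiff_const)).div_const ε)))

theorem isSchwartz_starkGauge {t : ℝ} (hv : IsSchwartz (v t)) :
    IsSchwartz (starkGauge ε E v t) := by
  convert hv.comp_add_const_mul_cexp ((t ^ 2 / 2) • E)
    (θ := fun x => -(t / ε) * inner ℝ E x + -(t ^ 3 / 6 * ‖E‖ ^ 2 / ε)) (by fun_prop) using 3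
    with x
  rw [starkGauge, starkPhase]
  push_cast
  ring_nf

theorem hasDerivAt_starkGauge {t : ℝ} {x : Eucl n}
    (hv : DifferentiableAt ℝ (fun p : ℝ × Eucl n => v p.1 p.2) (t, x + (t ^ 2 / 2) • E)) :
    HasDerivAt (fun s => starkGauge ε E v s x)
      ((deriv (fun s => v s (x + (t ^ 2 / 2) • E)) t
          + t * fderiv ℝ (v t) (x + (t ^ 2 / 2) • E) E) * starkPhase ε E t x
        + v t (x + (t ^ 2 / 2) • E)
          * (-I * ((inner ℝ E x + t ^ 2 / 2 * ‖E‖ ^ 2) / ε : ℝ) * starkPhase ε E t x)) t := by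
  have hγ : HasDerivAt (fun s : ℝ => x + (s ^ 2 / 2) • E) (t • E) t := by
    refine (((hasDerivAt_pow 2 t).div_const 2).smul_const E).const_add x |>.congr_deriv ?_
    congr 1
    ring
  have hv' := hv.hasDerivAt_comp_prodMk hγ
  rw [map_smul, real_smul] at hv'
  exact hv'.mul (hasDerivAt_starkPhase t x)

theorem lap_starkGauge {t : ℝ} (hv : ContDiff ℝ 2 (v t)) (x : Eucl n) :
    lap (starkGauge ε E v t) x
      = (lap (v t) (x + (t ^ 2 / 2) • E)
          + 2 * (-I * (t / ε : ℝ)) * fderiv ℝ (v t) (x + (t ^ 2 / 2) • E) E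
          + (-I * (t / ε : ℝ)) ^ 2 * ‖E‖ ^ 2 * v t (x + (t ^ 2 / 2) • E))
        * starkPhase ε E t x := by
  have hgauge : starkGauge ε E v t = fun z => v t (z + (t ^ 2 / 2) • E)
      * cexp (-I * (t / ε : ℝ) * inner ℝ E z + -I * (t ^ 3 / 6 * ‖E‖ ^ 2 / ε : ℝ)) :=
    funext fun z => by rw [starkGauge, starkPhase_eq_cexp_inner]
  have hshift : ContDiff ℝ 2 (fun z => v t (z + (t ^ 2 / 2) • E)) :=
    hv.comp (contDiff_id.add contDiff_const)
  rw [hgauge, lap_mul_cexp_inner hshift, lap_comp_add_const, fderiv_comp_add_right,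
    starkPhase_eq_cexp_inner]

theorem isSol_starkGauge {lam σ : ℝ} (hε : ε ≠ 0)
    (hv : IsSol Set.univ ε lam σ (fun _ => 0) v) :
    IsSol Set.univ ε lam σ (fun x => inner ℝ E x) (starkGauge ε E v) := by
  obtain ⟨hsmooth, hschwartz, hfree⟩ := hv
  rw [Set.univ_prod_univ, contDiffOn_univ] at hsmooth
  refine ⟨?_, fun t _ => isSchwartz_starkGauge (hschwartz t trivial), fun t _ x => ?_⟩
  · rw [Set.univ_prod_univ, contDiffOn_univ]
    exact contDiff_starkGauge hsmooth
  have hvt : ContDiff ℝ 2 (v t) :=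
    (hsmooth.comp (contDiff_const.prodMk contDiff_id)).of_le (WithTop.coe_le_coe.mpr le_top)
  have hfree_y := hfree t trivial (x + (t ^ 2 / 2) • E)
  rw [(hasDerivAt_starkGauge (hsmooth.differentiable (by simp) _)).deriv, lap_starkGauge hvt,
    starkGauge, norm_mul, norm_starkPhase, mul_one]
  simp only [ofReal_zero, zero_mul, zero_add] at hfree_y
  have hεC : (ε : ℂ) ≠ 0 := ofReal_ne_zero.mpr hε
  push_cast
  field_simp
  linear_combination (2 * starkPhase ε E t x) * hfree_y
    - (2 * starkPhase ε E t x * v t (x + (t ^ 2 / 2) • E) * inner ℝ E x) * I_sq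

end StarkGauge

theorem avron_herbst_general
    (n : ℕ) (ε lam σ : ℝ) (hε : 0 < ε)
    (E : Eucl n) (v u : ℝ → Eucl n → ℂ)
    (hv : IsSol Set.univ ε lam σ (fun _ => 0) v)
    (hu : u = fun t x => v t (x + (t^2/2) • E) *
      Complex.exp (-(Complex.I) *
        (((t * (inner ℝ E x : ℝ) + t^3/6 * ‖E‖^2) / ε : ℝ) : ℂ))) :
    IsSol Set.univ ε lam σ (fun x => (inner ℝ E x : ℝ)) u ∧ ∀ x, u 0 x = v 0 x := by
  subst hu
  exact ⟨isSol_starkGauge hε.ne' hv, fun x => by simp⟩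

/-- **Avron–Herbst formula (nonlinear).** If `v` is a classical Schwartz solution of the
free NLS `iε∂ₜv + (ε²/2)Δv = λ|v|^{2σ}v` and
`u(t,x) := v(t, x + (t²/2)E) exp(−i(t(E·x) + (t³/6)|E|²)/ε)`, then `u` is a classical
Schwartz solution of the NLS with Stark potential `V(x) = E·x`, with `u(0,·) = v(0,·)`. -/
theorem avron_herbst
    (n : ℕ) (hn : 1 ≤ n) (ε lam σ : ℝ) (hε : 0 < ε) (hσ : 0 < σ)
    (E : Eucl n) (v u : ℝ → Eucl n → ℂ)
    (hv : IsSol Set.univ ε lam σ (fun _ => 0) v)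
    (hu : u = fun t x => v t (x + (t^2/2) • E) *
      Complex.exp (-(Complex.I) *
        (((t * (inner ℝ E x : ℝ) + t^3/6 * ‖E‖^2) / ε : ℝ) : ℂ))) :
    IsSol Set.univ ε lam σ (fun x => (inner ℝ E x : ℝ)) u ∧ ∀ x, u 0 x = v 0 x :=
  avron_herbst_general n ε lam σ hε E v u hv hu
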